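/- A partial order P is a linear-interval order if and only if P has a linear extension fulfilling the 2+2 rule. -/

import Mathlib

variable {V : Type*}

/-- A strict partial order: irreflexive and transitive. -/
def IsPartialOrd (P : V → V → Prop) : Prop := Irreflexive P ∧ Transitive P

/-- A strict linear order: irreflexive, transitive, and total. -/
def IsLinearOrd (L : V → V → Prop) : Prop :=
  Irreflexive L ∧ Transitive L ∧ ∀ u v : V, u ≠ v → L u v ∨ L v u

/-- `L` is a linear extension of `P`. -/
def IsLinExt (P L : V → V → Prop) : Prop :=
  IsLinearOrd L ∧ ∀ u v : V, P u v → L u v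

/-- Four distinct elements `a0, b0, a1, b1` form a suborder `2+2` of `P`:
their only `P`-relations are `a0 ≺ b0` and `a1 ≺ b1`. -/
def IsTwoPlusTwo (P : V → V → Prop) (a0 b0 a1 b1 : V) : Prop :=
  ([a0, b0, a1, b1] : List V).Nodup ∧ P a0 b0 ∧ P a1 b1 ∧
  ¬ P b0 a0 ∧ ¬ P b1 a1 ∧
  ¬ P a0 a1 ∧ ¬ P a1 a0 ∧ ¬ P a0 b1 ∧ ¬ P b1 a0 ∧
  ¬ P a1 b0 ∧ ¬ P b0 a1 ∧ ¬ P b0 b1 ∧ ¬ P b1 b0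

/-- The linear extension `L` of `P` fulfills the `2+2` rule. -/
def TwoPlusTwoRule (P L : V → V → Prop) : Prop :=
  ∀ a0 b0 a1 b1 : V, IsTwoPlusTwo P a0 b0 a1 b1 → L b0 a1 ∨ L b1 a0

/-- Four distinct elements form an alternating 4-anticycle of `L` w.r.t. `P`. -/
def IsAlt4Anticycle (P L : V → V → Prop) (a0 b0 a1 b1 : V) : Prop :=
  ([a0, b0, a1, b1] : List V).Nodup ∧ P a0 b0 ∧ P a1 b1 ∧
  L a1 b0 ∧ ¬ P a1 b0 ∧ L a0 b1 ∧ ¬ P a0 b1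

/-- An alternating `2k`-anticycle of `L` w.r.t. `P`, given by `a, b : ZMod k → V`. -/
def IsAltAnticycle (P L : V → V → Prop) (k : ℕ) (a b : ZMod k → V) : Prop :=
  Function.Injective a ∧ Function.Injective b ∧ (∀ i j : ZMod k, a i ≠ b j) ∧
  ∀ i : ZMod k, P (a i) (b i) ∧ L (a (i + 1)) (b i) ∧ ¬ P (a (i + 1)) (b i)

/-- `P` is a linear-interval order: the intersection of a linear order and an
interval order (given by an interval representation `l`, `r`). -/
def IsLinearIntervalOrder (P : V → V → Prop) : Prop :=
  ∃ (L : V → V → Prop) (l r : V → ℝ), IsLinearOrd L ∧ (∀ v, l v ≤ r v) ∧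
    ∀ u v : V, P u v ↔ L u v ∧ r u < l v

/-!
A representation `(L, l, r)` excludes alternating 4-anticycles, as they would give
`r a0 < l b0 ≤ r a1 < l b1 ≤ r a0`; for a linear extension `L` this is exactly the 2+2 rule.
Conversely, given `L` with the 2+2 rule, impose `r u < l v` for `u ≺ v` and `l v ≤ r w` for `w`
before `v` in `L` with `w ⊀ v`. The induced relation "`r u < r w` is forced" is acyclic, because
the 2+2 rule makes every two-step path either have a shortcut or go down in `L`. Ranking along this
relation gives `r`, and `l v` is the least `r w` that it must not exceed.
-/

section Acyclic

variable {α : Type*} {S L : α → α → Prop}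

open Relation

lemma Relation.TransGen.exists_seq {x y : α} (h : TransGen S x y) :
    ∃ n, 0 < n ∧ ∃ a : ℕ → α, a 0 = x ∧ a n = y ∧ ∀ i < n, S (a i) (a (i + 1)) := by
  induction h with
  | @single y hxy =>
    refine ⟨1, one_pos, fun i => if i = 0 then x else y, rfl, rfl, fun i hi => ?_⟩
    obtain rfl : i = 0 := by omega
    simpa using hxy
  | @tail y z _ hyz ih =>
    obtain ⟨n, hn, a, ha0, han, ha⟩ := ih
    refine ⟨n + 1, n.succ_pos, fun i => if i = n + 1 then z else a i, by simp [ha0], by simp,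
      fun i hi => ?_⟩
    rcases Nat.lt_or_ge i n with hin | hin
    · simpa [hin.ne, show i ≠ n + 1 by omega] using ha i hin
    · obtain rfl : i = n := by omega
      simpa [han] using hyz

lemma step_mod_of_closed_walk {k : ℕ} (hk : 0 < k) {a : ℕ → α} (hak : a k = a 0)
    (ha : ∀ i < k, S (a i) (a (i + 1))) (j : ℕ) : S (a (j % k)) (a ((j + 1) % k)) := by
  have hjk := Nat.mod_lt j hk
  rw [← Nat.mod_add_mod]
  rcases Nat.lt_or_ge (j % k + 1) k with hlt | hge
  · rw [Nat.mod_eq_of_lt hlt]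
    exact ha _ hjk
  · rw [show j % k + 1 = k by omega, Nat.mod_self, ← hak]
    simpa [show j % k + 1 = k by omega] using ha _ hjk

/-- A shortest cycle admits no shortcut, so it goes down in `L` at every second vertex. -/
theorem Relation.transGen_irrefl_of_two_step (hS : ∀ x, ¬ S x x) (hLi : ∀ x, ¬ L x x)
    (hLt : ∀ {x y z}, L x y → L y z → L x z)
    (h2 : ∀ x y z, S x y → S y z → S x z ∨ L z x) (x : α) : ¬ TransGen S x x := by
  intro hx
  classical
  have hcyc : ∃ k, 0 < k ∧ ∃ a : ℕ → α, a k = a 0 ∧ ∀ i < k, S (a i) (a (i + 1)) := by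
    obtain ⟨n, hn, a, ha0, han, ha⟩ := hx.exists_seq
    exact ⟨n, hn, a, han.trans ha0.symm, ha⟩
  obtain ⟨hk, a, hak, ha⟩ := Nat.find_spec hcyc
  set k := Nat.find hcyc
  have hk2 : 2 ≤ k := by
    by_contra hk1
    have hk1 : k = 1 := by omega
    have h01 := ha 0 hk
    rw [zero_add, ← hk1, hak] at h01
    exact hS _ h01
  set b : ℕ → α := fun j => a (j % k)
  have hbk : ∀ j, b (j + k) = b j := fun j => by simp [b]
  have hb : ∀ j, S (b j) (b (j + 1)) := step_mod_of_closed_walk hk hak ha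
  have hdesc : ∀ j, L (b (j + 2)) (b j) := by
    intro j
    refine (h2 _ _ _ (hb j) (hb (j + 1))).resolve_left fun hshort => ?_
    refine Nat.find_min hcyc (m := k - 1) (by omega)
      ⟨by omega, fun i => if i = 0 then b j else b (j + i + 1), ?_, fun i hi => ?_⟩
    · simp [show k - 1 ≠ 0 by omega, show j + (k - 1) + 1 = j + k by omega, hbk]
    · rcases Nat.eq_zero_or_pos i with rfl | hi0
      · simpa using hshort
      · simpa [hi0.ne', Nat.add_assoc] using hb (j + i + 1)
  have hchain : ∀ m, L (b (2 * m + 2)) (b 0) := by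
    intro m
    induction m with
    | zero => simpa using hdesc 0
    | succ m ih => exact hLt (hdesc (2 * m + 2)) ih
  have hback : b (2 * (k - 1) + 2) = b 0 := by
    rw [show 2 * (k - 1) + 2 = 0 + k + k by omega, hbk, hbk]
  exact hLi _ (hback ▸ hchain (k - 1))

lemma exists_nat_rank_of_transGen_irrefl [Finite α] (h : ∀ x, ¬ TransGen S x x) :
    ∃ f : α → ℕ, ∀ x y, S x y → f x < f y :=
  ⟨fun y => {x | TransGen S x y}.ncard, fun x _ hxy => Set.ncard_lt_ncard
    ((Set.ssubset_iff_of_subset fun _ hz => hz.tail hxy).2 ⟨x, .single hxy, h x⟩)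
    (Set.toFinite _)⟩

end Acyclic

section LinearInterval

variable {P L : V → V → Prop}

open Relation

lemma twoPlusTwoRule_of_forall_not_isAlt4Anticycle (hL : IsLinearOrd L)
    (h : ∀ a0 b0 a1 b1, ¬ IsAlt4Anticycle P L a0 b0 a1 b1) : TwoPlusTwoRule P L := by
  rintro a0 b0 a1 b1 ⟨hnd, h0, h1, -, -, -, -, hn01, -, hn10, -, -, -⟩
  by_contra! hno
  have hne : a1 ≠ b0 ∧ a0 ≠ b1 := by
    simp only [List.nodup_cons, List.mem_cons, List.not_mem_nil, or_false, List.nodup_nil,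
      and_true, not_or] at hnd
    exact ⟨Ne.symm hnd.2.1.1, hnd.1.2.2⟩
  exact h a0 b0 a1 b1 ⟨hnd, h0, h1, (hL.2.2 _ _ hne.1).resolve_right hno.1, hn10,
    (hL.2.2 _ _ hne.2).resolve_right hno.2, hn01⟩

lemma TwoPlusTwoRule.not_isAlt4Anticycle (hRule : TwoPlusTwoRule P L) (hP : IsPartialOrd P)
    (hL : IsLinExt P L) (a0 b0 a1 b1 : V) : ¬ IsAlt4Anticycle P L a0 b0 a1 b1 := by
  rintro ⟨hnd, h0, h1, hL10, hn10, hL01, hn01⟩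
  obtain ⟨⟨hLi, hLt, -⟩, hPL⟩ := hL
  have hLasymm : ∀ {u v}, L u v → ¬ L v u := fun huv hvu => hLi _ (hLt huv hvu)
  have h22 : IsTwoPlusTwo P a0 b0 a1 b1 :=
    ⟨hnd, h0, h1, fun h => hLasymm (hPL _ _ h0) (hPL _ _ h),
      fun h => hLasymm (hPL _ _ h1) (hPL _ _ h), fun h => hn01 (hP.2 h h1),
      fun h => hn10 (hP.2 h h0), hn01, fun h => hLasymm hL01 (hPL _ _ h), hn10,
      fun h => hLasymm hL10 (hPL _ _ h), fun h => hn01 (hP.2 h0 h), fun h => hn10 (hP.2 h1 h)⟩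
  rcases hRule _ _ _ _ h22 with h | h
  · exact hLasymm hL10 h
  · exact hLasymm hL01 h

lemma not_isAlt4Anticycle_of_iff {β : Type*} [LinearOrder β] {l r : V → β}
    (hrep : ∀ u v, P u v ↔ L u v ∧ r u < l v) (a0 b0 a1 b1 : V) :
    ¬ IsAlt4Anticycle P L a0 b0 a1 b1 := by
  rintro ⟨-, h0, h1, hL10, hn10, hL01, hn01⟩
  have hlr10 : l b0 ≤ r a1 := le_of_not_gt fun h => hn10 ((hrep _ _).2 ⟨hL10, h⟩)
  have hlr01 : l b1 ≤ r a0 := le_of_not_gt fun h => hn01 ((hrep _ _).2 ⟨hL01, h⟩)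
  exact lt_irrefl (r a0) <| calc
    r a0 < l b0 := ((hrep _ _).1 h0).2
    _ ≤ r a1 := hlr10
    _ < l b1 := ((hrep _ _).1 h1).2
    _ ≤ r a0 := hlr01

/-- If `P` is represented by `L` and intervals `[l v, r v]`, then `LeftLeRight P L v w` forces
`l v ≤ r w`, so `RightLtRight P L u w` forces `r u < l v ≤ r w`. -/
def LeftLeRight (P L : V → V → Prop) (v w : V) : Prop := w = v ∨ (L w v ∧ ¬ P w v)

def RightLtRight (P L : V → V → Prop) (u w : V) : Prop := ∃ v, P u v ∧ LeftLeRight P L v w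

lemma not_rightLtRight_self (hP : ∀ x, ¬ P x x) (u : V) : ¬ RightLtRight P L u u := by
  rintro ⟨v, huv, rfl | ⟨-, hnuv⟩⟩
  · exact hP _ huv
  · exact hnuv huv

lemma rightLtRight_two_step (hP : IsPartialOrd P) (hL : IsLinExt P L)
    (hRule : TwoPlusTwoRule P L) {u v w : V} (huv : RightLtRight P L u v)
    (hvw : RightLtRight P L v w) : RightLtRight P L u w ∨ L w u := by
  obtain ⟨b, hub, hbv⟩ := huv
  obtain ⟨b', hvb', hb'w⟩ := hvw
  by_cases hub' : P u b'
  · exact Or.inl ⟨b', hub', hb'w⟩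
  right
  have hb'u : L b' u := by
    rcases hbv with rfl | ⟨hvb, hnvb⟩
    · exact absurd (hP.2 hub hvb') hub'
    have hne : u ≠ b' := by rintro rfl; exact hnvb (hP.2 hvb' hub)
    refine (hL.1.2.2 _ _ hne).resolve_left fun hub'L =>
      hRule.not_isAlt4Anticycle hP hL u b v b' ⟨?_, hub, hvb', hvb, hnvb, hub'L, hub'⟩
    simp only [List.nodup_cons, List.mem_cons, List.not_mem_nil, or_false, List.nodup_nil,
      not_false_eq_true, and_true, not_or]
    refine ⟨⟨fun h => hP.1 _ (h ▸ hub), fun h => hnvb (h ▸ hub), hne⟩,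
      ⟨fun h => hL.1.1 _ (h ▸ hvb), fun h => hnvb (h ▸ hvb')⟩, fun h => hP.1 _ (h ▸ hvb')⟩
  rcases hb'w with rfl | ⟨hwb', -⟩
  · exact hb'u
  · exact hL.1.2.1 hwb' hb'u

lemma TwoPlusTwoRule.not_transGen_rightLtRight_self (hRule : TwoPlusTwoRule P L)
    (hP : IsPartialOrd P) (hL : IsLinExt P L) (u : V) : ¬ TransGen (RightLtRight P L) u u :=
  transGen_irrefl_of_two_step (not_rightLtRight_self hP.1) hL.1.1 (fun h h' => hL.1.2.1 h h')
    (fun _ _ _ => rightLtRight_two_step hP hL hRule) u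

lemma isLinearIntervalOrder_of_rank (hL : IsLinExt P L) (r : V → ℕ)
    (hr : ∀ u w, RightLtRight P L u w → r u < r w) : IsLinearIntervalOrder P := by
  let l : V → ℕ := fun v => sInf (r '' {w | LeftLeRight P L v w})
  have hl_le : ∀ {v w}, LeftLeRight P L v w → l v ≤ r w := fun h => Nat.sInf_le ⟨_, h, rfl⟩
  have hl_mem : ∀ v, ∃ w, LeftLeRight P L v w ∧ r w = l v := fun v =>
    Nat.sInf_mem (s := r '' {w | LeftLeRight P L v w}) ⟨r v, v, Or.inl rfl, rfl⟩
  refine ⟨L, fun v => l v, fun v => r v, hL.1, fun v => Nat.cast_le.2 (hl_le (Or.inl rfl)),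
    fun u v => ?_⟩
  rw [Nat.cast_lt]
  constructor
  · intro huv
    refine ⟨hL.2 u v huv, ?_⟩
    obtain ⟨w, hvw, hw⟩ := hl_mem v
    exact hw ▸ hr u w ⟨v, huv, hvw⟩
  · rintro ⟨huvL, hlt⟩
    by_contra hnuv
    exact (hl_le (Or.inr ⟨huvL, hnuv⟩)).not_gt hlt

end LinearInterval

theorem stmt5 {V : Type*} [Fintype V] (P : V → V → Prop) (hP : IsPartialOrd P) :
    IsLinearIntervalOrder P ↔
      ∃ L : V → V → Prop, IsLinExt P L ∧ TwoPlusTwoRule P L := by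
  constructor
  · rintro ⟨L, l, r, hL, -, hrep⟩
    exact ⟨L, ⟨hL, fun u v h => ((hrep u v).1 h).1⟩,
      twoPlusTwoRule_of_forall_not_isAlt4Anticycle hL (not_isAlt4Anticycle_of_iff hrep)⟩
  · rintro ⟨L, hL, hRule⟩
    obtain ⟨r, hr⟩ :=
      exists_nat_rank_of_transGen_irrefl (hRule.not_transGen_rightLtRight_self hP hL)
    exact isLinearIntervalOrder_of_rank hL r hr
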